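/- arXiv:2211.10607 — 3 statements merged into one kernel-verified Lean document; each statement's English description precedes it below -/
import Mathlib

section
/- Let H be a hypergraph with no isolated vertices, V(H) = {1,…,n}, and let D = {1,…,|D|} be a cover of H. Let ≺ : γ_1 ≺ … ≺ γ_m be the linear order on the facets of NC(H) in which γ ≺ γ' iff the complement of γ is lexicographically smaller than the complement of γ'. Let γ, γ' ∈ NC(H) with (V(H)∖γ) ∩ D = (V(H)∖γ') ∩ D, and suppose the induced subgraph H[(V(H)∖γ) ∩ D] contains an edge. Then mes(γ, ≺) = mes(γ', ≺). -/
/-- A hypergraph: a finite vertex set `V` together with a finite family `E` of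
subsets of `V` (the edges). -/
structure HGraph where
  V : Finset ℕ
  E : Finset (Finset ℕ)
  edge_subset : ∀ e ∈ E, e ⊆ V

namespace HGraph

/-- The set of neighbours of `v`: all vertices `w` such that some edge contains
both `v` and `w`. -/
def nbhd (H : HGraph) (v : ℕ) : Finset ℕ :=
  H.V.filter fun w => ∃ e ∈ H.E, v ∈ e ∧ w ∈ e

/-- `N(S) = ⋃ v ∈ S, N(v)`. -/
def nbhdSet (H : HGraph) (S : Finset ℕ) : Finset ℕ :=
  S.biUnion H.nbhd

/-- `H` has no isolated vertex: every vertex has a neighbour. -/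
def NoIsolatedVertex (H : HGraph) : Prop :=
  ∀ v ∈ H.V, (H.nbhd v).Nonempty

/-- `B` is a cover of `H` if it meets every edge. -/
def IsCover (H : HGraph) (B : Finset ℕ) : Prop :=
  B ⊆ H.V ∧ ∀ e ∈ H.E, (e ∩ B).Nonempty

instance (H : HGraph) (B : Finset ℕ) : Decidable (H.IsCover B) :=
  inferInstanceAs (Decidable (_ ∧ _))

/-- `A` is independent if it contains no edge. -/
def IsIndependent (H : HGraph) (A : Finset ℕ) : Prop :=
  A ⊆ H.V ∧ ∀ e ∈ H.E, ¬ e ⊆ A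

/-- `W ⊆ V ∖ A` is a dominating set of `A` if `A ⊆ N(W)`. -/
def IsDominatingSet (H : HGraph) (A W : Finset ℕ) : Prop :=
  W ⊆ H.V \ A ∧ A ⊆ H.nbhdSet W

/-- The domination number `γ_A(H)` of a set `A`: the minimum size of a
dominating set of `A`. -/
noncomputable def domNumber (H : HGraph) (A : Finset ℕ) : ℕ :=
  sInf {n | ∃ W, H.IsDominatingSet A W ∧ W.card = n}

/-- The independence domination number
`γ_i(H) = max {γ_I(H) : I independent}`. -/
noncomputable def indepDomNumber (H : HGraph) : ℕ :=
  sSup {n | ∃ I, H.IsIndependent I ∧ H.domNumber I = n}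

end HGraph
/-- A finite abstract simplicial complex on vertex set `ℕ`: a finite family of
finite sets (faces) closed under taking subsets. -/
structure SComplex where
  faces : Finset (Finset ℕ)
  down_closed : ∀ ⦃σ⦄, σ ∈ faces → ∀ ⦃τ⦄, τ ⊆ σ → τ ∈ faces

namespace SComplex

/-- The vertex set of a simplicial complex. -/
def vertices (X : SComplex) : Finset ℕ := X.faces.sup id

/-- `σ` is a maximal face (facet) of `X`. -/
def IsMaximalFace (X : SComplex) (σ : Finset ℕ) : Prop :=
  σ ∈ X.faces ∧ ∀ τ ∈ X.faces, σ ⊆ τ → τ = σ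

/-- `(γ, σ)` is a free pair: `σ` is the unique maximal face containing `γ`. -/
def IsFreePair (X : SComplex) (γ σ : Finset ℕ) : Prop :=
  γ ∈ X.faces ∧ X.IsMaximalFace σ ∧ γ ⊆ σ ∧
    ∀ τ, X.IsMaximalFace τ → γ ⊆ τ → τ = σ

/-- The empty complex. -/
def empty : SComplex := ⟨∅, by intro σ h; simp at h⟩

/-- An elementary `d`-collapse from `X` to `Y`: there is a free pair `(γ, σ)`
with `|γ| ≤ d`, and `Y` is obtained from `X` by removing all faces `τ` with
`γ ⊆ τ ⊆ σ`. -/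
def ElemCollapse (d : ℕ) (X Y : SComplex) : Prop :=
  ∃ γ σ, X.IsFreePair γ σ ∧ γ.card ≤ d ∧
    Y.faces = X.faces.filter fun τ => ¬ (γ ⊆ τ ∧ τ ⊆ σ)

/-- `X` is `d`-collapsible: some finite sequence of elementary `d`-collapses
reduces `X` to the empty complex. -/
def Collapsible (d : ℕ) (X : SComplex) : Prop :=
  Relation.ReflTransGen (ElemCollapse d) X SComplex.empty

/-- The collapsibility number `C(X)`: the least `d` such that `X` is
`d`-collapsible. -/
noncomputable def collapsibility (X : SComplex) : ℕ :=
  sInf {d | X.Collapsible d}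

/-- The link of a face `σ`. -/
def link (X : SComplex) (σ : Finset ℕ) : SComplex where
  faces := X.faces.filter fun τ => σ ∩ τ = ∅ ∧ σ ∪ τ ∈ X.faces
  down_closed := by
    intro τ hτ ρ hρ
    simp only [Finset.mem_filter] at hτ ⊢
    have h1 : σ ∩ ρ ⊆ σ ∩ τ := Finset.inter_subset_inter (le_refl σ) hρ
    rw [hτ.2.1] at h1
    exact ⟨X.down_closed hτ.1 hρ, Finset.subset_empty.mp h1,
      X.down_closed hτ.2.2 (Finset.union_subset_union (le_refl σ) hρ)⟩

/-- The deletion of a face `σ`. -/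
def del (X : SComplex) (σ : Finset ℕ) : SComplex where
  faces := X.faces.filter fun τ => ¬ σ ⊆ τ
  down_closed := by
    intro τ hτ ρ hρ
    simp only [Finset.mem_filter] at hτ ⊢
    exact ⟨X.down_closed hτ.1 hρ, fun hc => hτ.2 (hc.trans hρ)⟩

/-- The induced subcomplex `X[A]` on a set `A` of vertices. -/
def induced (X : SComplex) (A : Finset ℕ) : SComplex where
  faces := X.faces.filter fun τ => τ ⊆ A
  down_closed := by
    intro τ hτ ρ hρ
    simp only [Finset.mem_filter] at hτ ⊢
    exact ⟨X.down_closed hτ.1 hρ, hρ.trans hτ.2⟩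

end SComplex
/-- The non-cover complex `NC(H)` of a hypergraph `H`: its faces are the
subsets of `V(H)` that are not covers of `H`. -/
def nonCoverComplex (H : HGraph) : SComplex where
  faces := H.V.powerset.filter fun A => ¬ H.IsCover A
  down_closed := by
    intro σ hσ τ hτ
    simp only [Finset.mem_filter, Finset.mem_powerset] at hσ ⊢
    refine ⟨hτ.trans hσ.1, fun hc => hσ.2 ⟨hσ.1, fun e he => ?_⟩⟩
    obtain ⟨x, hx⟩ := hc.2 e he
    rw [Finset.mem_inter] at hx
    exact ⟨x, Finset.mem_inter.mpr ⟨hx.1, hτ hx.2⟩⟩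
/-- Auxiliary recursion for the minimal exclusion sequence: `prev` is the set
of entries produced so far, and the list argument is the remaining part of the
ordered list of maximal faces. -/
def mesAux (γ : Finset ℕ) : List (Finset ℕ) → Finset ℕ → List ℕ
  | [], _ => []
  | f :: fs, prev =>
    if hf : γ ⊆ f then []
    else
      let v :=
        if hp : (prev ∩ (γ \ f)).Nonempty then (prev ∩ (γ \ f)).min' hp
        else (γ \ f).min' (Finset.sdiff_nonempty.mpr hf)
      v :: mesAux γ fs (insert v prev)

/-- The minimal exclusion sequence `mes(γ, ≺)`, where the linear order `≺` on
the maximal faces is given by the list `L = [γ₁, …, γₘ]`. -/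
def mes (γ : Finset ℕ) (L : List (Finset ℕ)) : List ℕ := mesAux γ L ∅

/-- `M(γ, ≺)`: the set of vertices appearing in `mes(γ, ≺)`. -/
def mesSet (γ : Finset ℕ) (L : List (Finset ℕ)) : Finset ℕ := (mes γ L).toFinset

/-- `d(X, ≺) = max_{γ ∈ X} |M(γ, ≺)|`. -/
def dOrder (X : SComplex) (L : List (Finset ℕ)) : ℕ :=
  X.faces.sup fun γ => (mesSet γ L).card

/-- `L` is a linear ordering of the maximal faces of `X`: it enumerates each
maximal face exactly once. -/
def IsFacetOrder (X : SComplex) (L : List (Finset ℕ)) : Prop :=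
  L.Nodup ∧ ∀ σ, σ ∈ L ↔ X.IsMaximalFace σ

/-- The list of elements of a finite set of naturals in decreasing order. -/
def descList (A : Finset ℕ) : List ℕ := (A.sort (· ≤ ·)).reverse

/-- `A <_L B`: the lexicographic order on finite sets of naturals, the sets
being listed in decreasing order of their vertices. -/
def lexLt (A B : Finset ℕ) : Prop :=
  List.Lex (· < ·) (descList A) (descList B)

/-- `L` is the linear order `≺` on the facets of `NC(H)` in which `γ ≺ γ'` iff
the complement of `γ` is lexicographically smaller than the complement of
`γ'`. -/
def IsNCLexFacetOrder (H : HGraph) (L : List (Finset ℕ)) : Prop :=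
  IsFacetOrder (nonCoverComplex H) L ∧
    L.Pairwise fun a b => lexLt (H.V \ a) (H.V \ b)

/-! The edge `e ⊆ (V ∖ γ) ∩ D` makes `V ∖ e` a non-cover containing both `γ` and `γ'`, so some
facet `τ` of `NC(H)` contains both, and both sequences stop at `τ`. Every facet `f ≺ τ` has
complement lexicographically below `V ∖ τ ⊆ e ⊆ D`; as `D` is an initial segment, this forces
`V ∖ f ⊆ D`. At such an `f` the recursion only sees `γ ∖ f = γ ∩ (V ∖ f)`, which is determined
by `(V ∖ γ) ∩ D`. -/

namespace SComplex

theorem exists_isMaximalFace_superset (X : SComplex) {σ : Finset ℕ} (hσ : σ ∈ X.faces) :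
    ∃ τ, X.IsMaximalFace τ ∧ σ ⊆ τ := by
  obtain ⟨τ, hστ, hτ⟩ := X.faces.exists_le_maximal hσ
  exact ⟨τ, ⟨hτ.prop, fun ρ hρ hτρ => le_antisymm (hτ.2 hρ hτρ) hτρ⟩, hστ⟩

end SComplex

theorem subset_of_mem_nonCoverComplex {H : HGraph} {γ : Finset ℕ}
    (hγ : γ ∈ (nonCoverComplex H).faces) : γ ⊆ H.V :=
  Finset.mem_powerset.mp (Finset.mem_filter.mp hγ).1

theorem sdiff_mem_nonCoverComplex {H : HGraph} {e : Finset ℕ} (he : e ∈ H.E) :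
    H.V \ e ∈ (nonCoverComplex H).faces := by
  refine Finset.mem_filter.mpr ⟨Finset.mem_powerset.mpr Finset.sdiff_subset, fun hc => ?_⟩
  obtain ⟨x, hx⟩ := hc.2 e he
  simp only [Finset.mem_inter, Finset.mem_sdiff] at hx
  exact hx.2.2 hx.1

theorem pairwise_ge_descList (A : Finset ℕ) : (descList A).Pairwise (· ≥ ·) := by
  simp [descList, List.pairwise_reverse, A.pairwise_sort]

theorem mem_descList {A : Finset ℕ} {x : ℕ} : x ∈ descList A ↔ x ∈ A := by
  simp [descList]

theorem List.exists_le_of_lex_lt_of_pairwise_ge {l₁ l₂ : List ℕ}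
    (hl₁ : l₁.Pairwise (· ≥ ·)) (h : List.Lex (· < ·) l₁ l₂) {x : ℕ} (hx : x ∈ l₁) :
    ∃ y ∈ l₂, x ≤ y := by
  have head_ge : ∀ {a t}, a :: t = l₁ → x ≤ a := by
    rintro a t rfl
    rcases List.mem_cons.mp hx with rfl | hx
    · rfl
    · exact List.rel_of_pairwise_cons hl₁ hx
  cases h with
  | nil => simp at hx
  | cons _ => exact ⟨_, List.mem_cons_self, head_ge rfl⟩
  | rel hab => exact ⟨_, List.mem_cons_self, (head_ge rfl).trans hab.le⟩

theorem exists_le_of_lexLt {A B : Finset ℕ} (h : lexLt A B) {x : ℕ} (hx : x ∈ A) :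
    ∃ y ∈ B, x ≤ y := by
  obtain ⟨y, hy, hxy⟩ :=
    List.exists_le_of_lex_lt_of_pairwise_ge (pairwise_ge_descList A) h (mem_descList.mpr hx)
  exact ⟨y, mem_descList.mp hy, hxy⟩

theorem subset_Icc_of_lexLt {A B : Finset ℕ} (h : lexLt A B) {a b : ℕ}
    (hA : ∀ x ∈ A, a ≤ x) (hB : B ⊆ Finset.Icc a b) : A ⊆ Finset.Icc a b := by
  intro x hx
  obtain ⟨y, hy, hxy⟩ := exists_le_of_lexLt h hx
  exact Finset.mem_Icc.mpr ⟨hA x hx, hxy.trans (Finset.mem_Icc.mp (hB hy)).2⟩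

theorem Finset.subset_sdiff_of_subset_sdiff {α : Type*} [DecidableEq α] {V γ e : Finset α}
    (hγ : γ ⊆ V) (he : e ⊆ V \ γ) : γ ⊆ V \ e :=
  Finset.subset_sdiff.mpr ⟨hγ, (Finset.subset_sdiff.mp he).2.symm⟩

theorem Finset.sdiff_eq_sdiff_of_sdiff_inter_eq {α : Type*} [DecidableEq α]
    {V D γ γ' f : Finset α} (hγ : γ ⊆ V) (hγ' : γ' ⊆ V)
    (heq : (V \ γ) ∩ D = (V \ γ') ∩ D) (hf : V \ f ⊆ D) : γ \ f = γ' \ f := by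
  ext x
  have hx := Finset.ext_iff.mp heq x
  grind

theorem mesAux_append_cons_congr {γ γ' σ : Finset ℕ} (hγ : γ ⊆ σ) (hγ' : γ' ⊆ σ)
    {M₁ : List (Finset ℕ)} (hM₁ : ∀ f ∈ M₁, γ \ f = γ' \ f) (M₂ : List (Finset ℕ))
    (prev : Finset ℕ) :
    mesAux γ (M₁ ++ σ :: M₂) prev = mesAux γ' (M₁ ++ σ :: M₂) prev := by
  induction M₁ generalizing prev with
  | nil => simp [mesAux, hγ, hγ']
  | cons f M₁ ih =>
    have hf : γ \ f = γ' \ f := hM₁ f List.mem_cons_self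
    have ih := ih (fun g hg => hM₁ g (List.mem_cons_of_mem f hg))
    have hsub : γ ⊆ f ↔ γ' ⊆ f := by
      rw [← Finset.sdiff_eq_empty_iff_subset, hf, Finset.sdiff_eq_empty_iff_subset]
    by_cases h : γ ⊆ f
    · simp [mesAux, h, hsub.mp h]
    · simp only [List.cons_append, mesAux, dif_neg h, dif_neg (hsub.not.mp h), hf, ih]

theorem mes_eq_of_compl_inter_cover_eq_general (H : HGraph) (n : ℕ)
    (hV : H.V = Finset.Icc 1 n)
    (D : Finset ℕ) (hD : D = Finset.Icc 1 D.card)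
    (L : List (Finset ℕ)) (hL : IsNCLexFacetOrder H L)
    (γ γ' : Finset ℕ) (hγ : γ ∈ (nonCoverComplex H).faces)
    (hγ' : γ' ∈ (nonCoverComplex H).faces)
    (heq : (H.V \ γ) ∩ D = (H.V \ γ') ∩ D)
    (hedge : ∃ e ∈ H.E, e ⊆ (H.V \ γ) ∩ D) :
    mes γ L = mes γ' L := by
  obtain ⟨⟨-, hLmem⟩, hLlex⟩ := hL
  obtain ⟨e, heE, he⟩ := hedge
  obtain ⟨τ, hτ, heτ⟩ :=
    (nonCoverComplex H).exists_isMaximalFace_superset (sdiff_mem_nonCoverComplex heE)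
  obtain ⟨M₁, M₂, rfl⟩ := List.append_of_mem ((hLmem τ).mpr hτ)
  have hγV := subset_of_mem_nonCoverComplex hγ
  have hγ'V := subset_of_mem_nonCoverComplex hγ'
  have heγ : e ⊆ H.V \ γ := he.trans Finset.inter_subset_left
  have heγ' : e ⊆ H.V \ γ' := (heq ▸ he).trans Finset.inter_subset_left
  have hτD : H.V \ τ ⊆ D := (sdiff_le_comm.mp heτ).trans (he.trans Finset.inter_subset_right)
  refine mesAux_append_cons_congr ((Finset.subset_sdiff_of_subset_sdiff hγV heγ).trans heτ)
    ((Finset.subset_sdiff_of_subset_sdiff hγ'V heγ').trans heτ) (fun f hf => ?_) M₂ ∅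
  have hlex : lexLt (H.V \ f) (H.V \ τ) :=
    (List.pairwise_append.mp hLlex).2.2 f hf τ List.mem_cons_self
  have hV_pos : ∀ x ∈ H.V \ f, 1 ≤ x := fun x hx =>
    (Finset.mem_Icc.mp (hV ▸ (Finset.mem_sdiff.mp hx).1)).1
  have hfD : H.V \ f ⊆ D := by
    rw [hD] at hτD ⊢
    exact subset_Icc_of_lexLt hlex hV_pos hτD
  exact Finset.sdiff_eq_sdiff_of_sdiff_inter_eq hγV hγ'V heq hfD

/-- Let `H` be a hypergraph with no isolated vertices,
`V(H) = {1, …, n}`, and let `D = {1, …, |D|}` be a cover of `H`. Let `≺` (given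
by the list `L`) be the lexicographic-on-complements linear order on the facets
of `NC(H)`. If `γ, γ' ∈ NC(H)` satisfy `(V∖γ) ∩ D = (V∖γ') ∩ D` and the
induced subgraph `H[(V∖γ) ∩ D]` contains an edge, then
`mes(γ, ≺) = mes(γ', ≺)`. -/
theorem mes_eq_of_compl_inter_cover_eq (H : HGraph) (n : ℕ)
    (hiso : H.NoIsolatedVertex) (hV : H.V = Finset.Icc 1 n)
    (D : Finset ℕ) (hcov : H.IsCover D) (hD : D = Finset.Icc 1 D.card)
    (L : List (Finset ℕ)) (hL : IsNCLexFacetOrder H L)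
    (γ γ' : Finset ℕ) (hγ : γ ∈ (nonCoverComplex H).faces)
    (hγ' : γ' ∈ (nonCoverComplex H).faces)
    (heq : (H.V \ γ) ∩ D = (H.V \ γ') ∩ D)
    (hedge : ∃ e ∈ H.E, e ⊆ (H.V \ γ) ∩ D) :
    mes γ L = mes γ' L :=
  mes_eq_of_compl_inter_cover_eq_general H n hV D hD L hL γ γ' hγ hγ' heq hedge
end

section
/- Let H be a hypergraph with no isolated vertices and let D be a cover of H. Then for any S ⊆ D, |N(S) ∩ (V(H)∖D)| − |S| ≤ |V(H)∖D| − γ_{V(H)∖D}(H). -/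
/-!
Put `A = V ∖ D`. Since `H` has no isolated vertices and `D` is a cover, every vertex is a
neighbour of some vertex of `D`. Hence `S` together with one such neighbour in `D` for
each vertex of `A ∖ N(S)` dominates `A`, and so
`γ_A(H) ≤ |S| + |A ∖ N(S)| = |S| + |A| - |N(S) ∩ A|`.
-/

/-- A hypergraph: a finite vertex set `V` together with a finite family `E` of
subsets of `V` (the edges). -/
structure FinHypergraph where
  V : Finset ℕ
  E : Finset (Finset ℕ)
  edge_subset : ∀ e ∈ E, e ⊆ V

namespace FinHypergraph

def nbhd (H : FinHypergraph) (v : ℕ) : Finset ℕ :=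
  H.V.filter fun w => ∃ e ∈ H.E, v ∈ e ∧ w ∈ e

/-- `N(S) = ⋃ v ∈ S, N(v)`. -/
def nbhdSet (H : FinHypergraph) (S : Finset ℕ) : Finset ℕ :=
  S.biUnion H.nbhd

def NoIsolatedVertex (H : FinHypergraph) : Prop :=
  ∀ v ∈ H.V, (H.nbhd v).Nonempty

def IsCover (H : FinHypergraph) (B : Finset ℕ) : Prop :=
  B ⊆ H.V ∧ ∀ e ∈ H.E, (e ∩ B).Nonempty

instance (H : FinHypergraph) (B : Finset ℕ) : Decidable (H.IsCover B) :=
  inferInstanceAs (Decidable (_ ∧ _))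

def IsIndependent (H : FinHypergraph) (A : Finset ℕ) : Prop :=
  A ⊆ H.V ∧ ∀ e ∈ H.E, ¬ e ⊆ A

def IsDominatingSet (H : FinHypergraph) (A W : Finset ℕ) : Prop :=
  W ⊆ H.V \ A ∧ A ⊆ H.nbhdSet W

/-- `γ_A(H)`, with the junk value `sInf ∅ = 0` when `A` has no dominating set. -/
noncomputable def domNumber (H : FinHypergraph) (A : Finset ℕ) : ℕ :=
  sInf {n | ∃ W, H.IsDominatingSet A W ∧ W.card = n}

/-- The independence domination number
`γ_i(H) = max {γ_I(H) : I independent}`. -/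
noncomputable def indepDomNumber (H : FinHypergraph) : ℕ :=
  sSup {n | ∃ I, H.IsIndependent I ∧ H.domNumber I = n}

variable (H : FinHypergraph)

theorem domNumber_le_card {A W : Finset ℕ} (hW : H.IsDominatingSet A W) :
    H.domNumber A ≤ W.card :=
  Nat.sInf_le ⟨W, hW, rfl⟩

theorem nbhdSet_union (S T : Finset ℕ) :
    H.nbhdSet (S ∪ T) = H.nbhdSet S ∪ H.nbhdSet T :=
  Finset.union_biUnion

theorem exists_mem_nbhd_of_isCover {D : Finset ℕ} (hiso : H.NoIsolatedVertex)
    (hcov : H.IsCover D) {v : ℕ} (hv : v ∈ H.V) : ∃ d ∈ D, v ∈ H.nbhd d := by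
  obtain ⟨w, hw⟩ := hiso v hv
  obtain ⟨e, he, hve, -⟩ := (Finset.mem_filter.mp hw).2
  obtain ⟨d, hd⟩ := hcov.2 e he
  obtain ⟨hde, hdD⟩ := Finset.mem_inter.mp hd
  exact ⟨d, hdD, Finset.mem_filter.mpr ⟨hv, e, he, hde, hve⟩⟩

theorem exists_card_le_subset_nbhdSet {B C : Finset ℕ}
    (h : ∀ v ∈ B, ∃ c ∈ C, v ∈ H.nbhd c) :
    ∃ T ⊆ C, T.card ≤ B.card ∧ B ⊆ H.nbhdSet T := by
  classical
  choose! f hfC hfnb using h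
  refine ⟨B.image f, ?_, Finset.card_image_le, ?_⟩
  · intro c hc
    obtain ⟨v, hv, rfl⟩ := Finset.mem_image.mp hc
    exact hfC v hv
  · intro v hv
    exact Finset.mem_biUnion.mpr ⟨f v, Finset.mem_image_of_mem f hv, hfnb v hv⟩

theorem domNumber_sdiff_le {D S : Finset ℕ} (hiso : H.NoIsolatedVertex) (hcov : H.IsCover D)
    (hS : S ⊆ D) :
    H.domNumber (H.V \ D) ≤ S.card + ((H.V \ D) \ H.nbhdSet S).card := by
  classical
  obtain ⟨T, hTD, hTcard, hTnbhd⟩ :=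
    H.exists_card_le_subset_nbhdSet (B := (H.V \ D) \ H.nbhdSet S) fun v hv =>
      H.exists_mem_nbhd_of_isCover hiso hcov (Finset.mem_sdiff.mp (Finset.mem_sdiff.mp hv).1).1
  have hdom : H.IsDominatingSet (H.V \ D) (S ∪ T) := by
    refine ⟨?_, ?_⟩
    · intro w hw
      have hwD : w ∈ D := Finset.union_subset hS hTD hw
      exact Finset.mem_sdiff.mpr ⟨hcov.1 hwD, fun hw' => (Finset.mem_sdiff.mp hw').2 hwD⟩
    · intro v hv
      rw [nbhdSet_union, Finset.mem_union]
      by_cases hvS : v ∈ H.nbhdSet S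
      · exact Or.inl hvS
      · exact Or.inr (hTnbhd (Finset.mem_sdiff.mpr ⟨hv, hvS⟩))
  calc H.domNumber (H.V \ D) ≤ (S ∪ T).card := H.domNumber_le_card hdom
    _ ≤ S.card + T.card := Finset.card_union_le S T
    _ ≤ S.card + ((H.V \ D) \ H.nbhdSet S).card := Nat.add_le_add_left hTcard _

end FinHypergraph

/-- Let `H` be a hypergraph with no isolated vertices and `D`
a cover of `H`. Then for any `S ⊆ D`,
`|N(S) ∩ (V∖D)| − |S| ≤ |V∖D| − γ_{V∖D}(H)`. -/
theorem neighbour_inequality (H : FinHypergraph) (hiso : H.NoIsolatedVertex)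
    (D : Finset ℕ) (hcov : H.IsCover D) (S : Finset ℕ) (hS : S ⊆ D) :
    ((H.nbhdSet S ∩ (H.V \ D)).card : ℤ) - S.card ≤
      ((H.V \ D).card : ℤ) - H.domNumber (H.V \ D) := by
  have hdom := H.domNumber_sdiff_le hiso hcov hS
  have hsplit := Finset.card_sdiff_add_card_inter (H.V \ D) (H.nbhdSet S)
  rw [Finset.inter_comm] at hsplit
  omega
end

section
/- Let X be a finite abstract simplicial complex of dimension at least k. If X_(k)^o = ∅, i.e., every k-dimensional face σ of X satisfies lk(σ, X) = X[V(X)∖σ], then X is a simplex (the full complex of all subsets of its vertex set). -/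
/-! If the link of a `(k+1)`-face `σ` is the full induced complex on the other vertices, then
`σ ∪ τ` is a face for every face `τ`. Starting from a face `ρ` with at least `k + 1` vertices
one can therefore add vertices one at a time: to add `v`, first add it to `ρ` minus a vertex
(induction on `|ρ|`), extract from that a `(k+1)`-face `σ ∋ v` with `σ ∖ {v} ⊆ ρ`, and take
`σ ∪ ρ`. Hence `ρ ∪ A` is a face for every set `A` of vertices. -/

namespace SComplex

variable {X : SComplex}

theorem subset_vertices {σ : Finset ℕ} (hσ : σ ∈ X.faces) : σ ⊆ X.vertices :=
  Finset.le_sup (f := id) hσ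

theorem singleton_mem_faces {v : ℕ} (hv : v ∈ X.vertices) : ({v} : Finset ℕ) ∈ X.faces := by
  obtain ⟨σ, hσ, hvσ⟩ := Finset.mem_sup.mp hv
  exact X.down_closed hσ (Finset.singleton_subset_iff.mpr hvσ)

theorem union_mem_faces_of_link_eq_induced {σ τ : Finset ℕ}
    (hσ : X.link σ = X.induced (X.vertices \ σ)) (hτ : τ ∈ X.faces) : σ ∪ τ ∈ X.faces := by
  have hτσ : τ \ σ ∈ (X.induced (X.vertices \ σ)).faces :=
    Finset.mem_filter.mpr ⟨X.down_closed hτ Finset.sdiff_subset,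
      Finset.sdiff_subset_sdiff (subset_vertices hτ) subset_rfl⟩
  rw [← hσ] at hτσ
  simpa only [Finset.union_sdiff_self_eq_union] using (Finset.mem_filter.mp hτσ).2.2

/-- `X_(k)^o = ∅`. -/
def LinksInduced (X : SComplex) (k : ℕ) : Prop :=
  ∀ σ ∈ X.faces, σ.card = k + 1 → X.link σ = X.induced (X.vertices \ σ)

theorem insert_mem_faces_of_linksInduced {k : ℕ} (h : X.LinksInduced k) {ρ : Finset ℕ}
    (hρ : ρ ∈ X.faces) (hcard : k + 1 ≤ ρ.card) {v : ℕ} (hv : v ∈ X.vertices) :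
    insert v ρ ∈ X.faces := by
  obtain ⟨n, hn⟩ : ∃ n, ρ.card = n := ⟨_, rfl⟩
  rw [hn] at hcard
  induction n, hcard using Nat.le_induction generalizing ρ with
  | base =>
    simpa only [Finset.union_singleton] using
      union_mem_faces_of_link_eq_induced (h ρ hρ hn) (singleton_mem_faces hv)
  | succ n hkn ih =>
    by_cases hvρ : v ∈ ρ
    · rwa [Finset.insert_eq_of_mem hvρ]
    obtain ⟨u, hu⟩ : ρ.Nonempty := Finset.card_pos.mp (by omega)
    have hρ'card : (ρ.erase u).card = n := by rw [Finset.card_erase_of_mem hu, hn]; rfl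
    have hρ' : insert v (ρ.erase u) ∈ X.faces :=
      ih (X.down_closed hρ (Finset.erase_subset u ρ)) hρ'card
    obtain ⟨σ', hσ'ρ, hσ'card⟩ := Finset.exists_subset_card_eq (s := ρ.erase u) (n := k) (by omega)
    have hvσ' : v ∉ σ' := fun hv' => hvρ (Finset.mem_of_mem_erase (hσ'ρ hv'))
    have hσ : insert v σ' ∈ X.faces := X.down_closed hρ' (Finset.insert_subset_insert v hσ'ρ)
    have hσρ : insert v σ' ∪ ρ = insert v ρ := by
      rw [Finset.insert_union,
        Finset.union_eq_right.mpr (hσ'ρ.trans (Finset.erase_subset u ρ))]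
    rw [← hσρ]
    exact union_mem_faces_of_link_eq_induced
      (h _ hσ (by rw [Finset.card_insert_of_notMem hvσ', hσ'card])) hρ

theorem union_mem_faces_of_linksInduced {k : ℕ} (h : X.LinksInduced k) {ρ : Finset ℕ}
    (hρ : ρ ∈ X.faces) (hcard : k + 1 ≤ ρ.card) {A : Finset ℕ} (hA : A ⊆ X.vertices) :
    ρ ∪ A ∈ X.faces := by
  induction A using Finset.induction_on with
  | empty => simpa only [Finset.union_empty] using hρ
  | insert v A _ ih =>
    rw [Finset.insert_subset_iff] at hA
    rw [Finset.union_insert]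
    exact insert_mem_faces_of_linksInduced h (ih hA.2)
      (hcard.trans (Finset.card_le_card Finset.subset_union_left)) hA.1

end SComplex

/-- Let `X` be a finite abstract simplicial complex of
dimension at least `k`. If every `k`-dimensional face `σ` of `X` satisfies
`lk(σ, X) = X[V(X) ∖ σ]` (i.e. `X_(k)^o = ∅`), then `X` is a simplex, the full
complex of all subsets of its vertex set. -/
theorem isSimplex_of_all_links_induced (X : SComplex) (k : ℕ)
    (hdim : ∃ σ ∈ X.faces, k + 1 ≤ σ.card)
    (h : ∀ σ ∈ X.faces, σ.card = k + 1 → X.link σ = X.induced (X.vertices \ σ)) :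
    X.faces = X.vertices.powerset := by
  obtain ⟨ρ, hρ, hcard⟩ := hdim
  ext A
  rw [Finset.mem_powerset]
  exact ⟨SComplex.subset_vertices, fun hA => X.down_closed
    (SComplex.union_mem_faces_of_linksInduced h hρ hcard hA) Finset.subset_union_right⟩
end
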